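/- arXiv:2410.11942 — 4 statements merged into one kernel-verified Lean document; each statement's English description precedes it below -/
import Mathlib

section
/- Let S ⊆ P satisfy S^Ω = S, and let π be a truncation of P. Define the bulk stabilizers S_B = S ∩ π(P) and the truncated stabilizers S_T = π(S). Then S_B = S_T^Ω ∩ π(P): the set of elements of π(P) commuting with all truncated stabilizers is exactly the set of bulk stabilizers. -/
/-- `P = ⊕_{i∈I} (ℤ_d)²` with the symplectic pairing
`Ω(a,b) = Σ_i (a_i^X b_i^Z − a_i^Z b_i^X)`. -/
noncomputable def Omega {I : Type*} {d : ℕ} (a b : I →₀ ZMod d × ZMod d) : ZMod d :=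
  a.sum fun i v => v.1 * (b i).2 - v.2 * (b i).1

/-- The commutant `A^Ω = {c ∈ P : Ω(c,a) = 0 for all a ∈ A}`. -/
def commutant {I : Type*} {d : ℕ} (A : Set (I →₀ ZMod d × ZMod d)) :
    Set (I →₀ ZMod d × ZMod d) :=
  {c | ∀ a ∈ A, Omega c a = 0}

lemma Omega_eq_sum_union {I : Type*} [DecidableEq I] {d : ℕ} (a b : I →₀ ZMod d × ZMod d) :
    Omega a b = ∑ i ∈ a.support ∪ b.support, ((a i).1 * (b i).2 - (a i).2 * (b i).1) := by
  rw [Omega, Finsupp.sum_of_support_subset a Finset.subset_union_left]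
  intro i _
  simp

lemma Omega_swap {I : Type*} {d : ℕ} (a b : I →₀ ZMod d × ZMod d) :
    Omega a b = -Omega b a := by
  classical
  rw [Omega_eq_sum_union, Omega_eq_sum_union, Finset.union_comm, ← Finset.sum_neg_distrib]
  exact Finset.sum_congr rfl fun i _ => by ring

lemma Omega_add_right {I : Type*} {d : ℕ} (a b c : I →₀ ZMod d × ZMod d) :
    Omega a (b + c) = Omega a b + Omega a c := by
  rw [Omega, Omega, Omega, Finsupp.sum, Finsupp.sum, Finsupp.sum, ← Finset.sum_add_distrib]
  refine Finset.sum_congr rfl fun i _ => ?_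
  simp only [Finsupp.add_apply, Prod.fst_add, Prod.snd_add]
  ring

section Truncation

variable {I : Type*} {d : ℕ} {π : (I →₀ ZMod d × ZMod d) →+ (I →₀ ZMod d × ZMod d)}

/-- Seen from `π(P)`, an element and its truncation are indistinguishable: `s - π s ∈ ker π`
pairs trivially with `π(P)`. -/
lemma Omega_apply_right_of_mem_range (hproj : ∀ x, π (π x) = π x)
    (horth : ∀ x, π x = 0 → ∀ y ∈ Set.range π, Omega x y = 0)
    {c : I →₀ ZMod d × ZMod d} (hc : c ∈ Set.range π) (s : I →₀ ZMod d × ZMod d) :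
    Omega c (π s) = Omega c s := by
  have hker : π (s - π s) = 0 := by rw [map_sub, hproj, sub_self]
  have hdefect : Omega c (s - π s) = 0 := by rw [Omega_swap, horth _ hker c hc, neg_zero]
  calc Omega c (π s) = Omega c (π s) + Omega c (s - π s) := by rw [hdefect, add_zero]
    _ = Omega c s := by rw [← Omega_add_right, add_sub_cancel]

lemma mem_commutant_image_iff (hproj : ∀ x, π (π x) = π x)
    (horth : ∀ x, π x = 0 → ∀ y ∈ Set.range π, Omega x y = 0)
    {c : I →₀ ZMod d × ZMod d} (hc : c ∈ Set.range π) (A : Set (I →₀ ZMod d × ZMod d)) :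
    c ∈ commutant (π '' A) ↔ c ∈ commutant A := by
  simp only [commutant, Set.mem_ofPred_eq, Set.forall_mem_image,
    Omega_apply_right_of_mem_range hproj horth hc]

end Truncation

/-- For a topological stabilizer group `S` (with `S^Ω = S`) and a truncation `π`,
the bulk stabilizers `S_B = S ∩ π(P)` coincide with `S_T^Ω ∩ π(P)`, where
`S_T = π(S)` are the truncated stabilizers. -/
theorem bulk_eq_truncated_commutant {I : Type*} {d : ℕ}
    (S : AddSubgroup (I →₀ ZMod d × ZMod d))
    (hS : commutant (S : Set (I →₀ ZMod d × ZMod d)) = (S : Set (I →₀ ZMod d × ZMod d)))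
    (π : (I →₀ ZMod d × ZMod d) →+ (I →₀ ZMod d × ZMod d))
    (hproj : ∀ x, π (π x) = π x)
    (horth : ∀ x, π x = 0 → ∀ y ∈ Set.range π, Omega x y = 0) :
    (S : Set (I →₀ ZMod d × ZMod d)) ∩ Set.range π =
      commutant (π '' (S : Set (I →₀ ZMod d × ZMod d))) ∩ Set.range π := by
  ext c
  simp only [Set.mem_inter_iff]
  refine and_congr_left fun hc => ?_
  rw [mem_commutant_image_iff hproj horth hc, hS]
end

section
/- A formal Laurent series f(x) = Σ_{i≥−k} a_i x^i with coefficients a_i ∈ ℤ_d is a unit in the ring ℤ_d((x)) if and only if the ideal of ℤ_d generated by the coefficients {a_i} is all of ℤ_d, i.e. there exist finitely many m_i ∈ ℤ_d with Σ m_i a_i ≡ 1 (mod d). -/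
/-!
Every maximal ideal `M` of `R⟦Γ⟧` over an artinian ring `R` is the kernel of the reduction
`R⟦Γ⟧ → (R ⧸ p)⟦Γ⟧`, where `p = M ∩ R`: the prime `p` is maximal, so the target is a field and the
kernel is maximal, while `p` is finitely generated, so the kernel is `p · R⟦Γ⟧ ⊆ M`. Hence a series
is a non-unit iff all its coefficients lie in a common maximal ideal of `R`, i.e. iff they generate
a proper ideal.
-/

namespace HahnSeries

section Lift

variable {Γ R S : Type*} [PartialOrder Γ] [Zero R] [Zero S]

theorem exists_map_eq_of_forall_coeff_mem_range {F : Type*} [FunLike F R S] [ZeroHomClass F R S]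
    (φ : F) (y : HahnSeries Γ S) (hy : ∀ g, y.coeff g ∈ Set.range φ) :
    ∃ x : HahnSeries Γ R, x.map φ = y := by
  classical
  let x : HahnSeries Γ R :=
    { coeff := fun g => if y.coeff g = 0 then 0 else (hy g).choose
      isPWO_support' := y.isPWO_support.mono fun g hg => by
        by_contra hy0
        exact hg (if_pos (not_not.1 hy0)) }
  refine ⟨x, HahnSeries.ext (funext fun g => ?_)⟩
  by_cases hg : y.coeff g = 0
  · simp [x, hg]
  · simp [x, hg, (hy g).choose_spec]

end Lift

section MapRingHom

variable {Γ R S : Type*} [AddCommMonoid Γ] [PartialOrder Γ] [IsOrderedCancelAddMonoid Γ]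

section Semiring

variable [Semiring R] [Semiring S]

@[simps]
noncomputable def mapRingHom (f : R →+* S) : HahnSeries Γ R →+* HahnSeries Γ S where
  toFun x := x.map f
  map_one' := HahnSeries.map_one f.toMonoidWithZeroHom
  map_mul' _ _ := HahnSeries.map_mul (f : R →ₙ+* S)
  map_zero' := HahnSeries.map_zero f.toZeroHom
  map_add' _ _ := HahnSeries.map_add (f : R →+ S)

theorem mem_ker_mapRingHom {f : R →+* S} {x : HahnSeries Γ R} :
    x ∈ RingHom.ker (mapRingHom (Γ := Γ) f) ↔ ∀ g, x.coeff g ∈ RingHom.ker f := by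
  simp [RingHom.mem_ker, HahnSeries.ext_iff, funext_iff]

theorem mapRingHom_surjective {f : R →+* S} (hf : Function.Surjective f) :
    Function.Surjective (mapRingHom (Γ := Γ) f) :=
  fun y => exists_map_eq_of_forall_coeff_mem_range f y fun g => hf (y.coeff g)

end Semiring

theorem ker_mapRingHom [CommRing R] [Semiring S] (f : R →+* S) (hf : (RingHom.ker f).FG) :
    RingHom.ker (mapRingHom (Γ := Γ) f) = (RingHom.ker f).map C := by
  refine le_antisymm (fun x hx => ?_) (Ideal.map_le_iff_le_comap.2 fun r hr => ?_)
  · obtain ⟨n, c, hc⟩ := Submodule.fg_iff_exists_fin_generating_family.1 hf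
    -- `x = ∑ j, C (c j) * z_j`, where `z_j` collects the weights of `c j` in the coefficients of `x`
    have hcoeff : ∀ g, x.coeff g ∈ Set.range (Fintype.linearCombination R c) := fun g => by
      have hg := mem_ker_mapRingHom.1 hx g
      rwa [← hc, ← Fintype.range_linearCombination] at hg
    obtain ⟨z, rfl⟩ := exists_map_eq_of_forall_coeff_mem_range _ x hcoeff
    have hz : z.map (Fintype.linearCombination R c) =
        ∑ j, C (c j) * z.map (LinearMap.proj (R := R) j) := by
      ext g
      simp [coeff_sum, Fintype.linearCombination_apply, mul_comm]
    rw [hz]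
    refine Ideal.sum_mem _ fun j _ => Ideal.mul_mem_right _ _ (Ideal.mem_map_of_mem _ ?_)
    exact hc ▸ Submodule.subset_span ⟨j, rfl⟩
  · rw [Ideal.mem_comap, RingHom.mem_ker, mapRingHom_apply, map_C, RingHom.mem_ker.1 hr, map_zero]

end MapRingHom

section IsUnit

theorem span_range_coeff_eq_top_of_isUnit {Γ R : Type*} [AddCommMonoid Γ] [PartialOrder Γ]
    [IsOrderedCancelAddMonoid Γ] [CommSemiring R] {x : HahnSeries Γ R} (hx : IsUnit x) :
    Ideal.span (Set.range x.coeff) = ⊤ := by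
  obtain ⟨⟨x, y, hxy, -⟩, rfl⟩ := hx
  have h : (x * y).coeff 0 = 1 := by simp [hxy, coeff_one]
  rw [Ideal.eq_top_iff_one, ← h, coeff_mul]
  exact Ideal.sum_mem _ fun ij _ => Ideal.mul_mem_right _ _ (Ideal.subset_span ⟨ij.1, rfl⟩)

variable {Γ R : Type*} [AddCommGroup Γ] [LinearOrder Γ] [IsOrderedAddMonoid Γ]
  [CommRing R] [IsArtinianRing R]

theorem eq_ker_mapRingHom_of_isMaximal (M : Ideal (HahnSeries Γ R)) [hM : M.IsMaximal] :
    M = RingHom.ker (mapRingHom (Γ := Γ) (Ideal.Quotient.mk (M.comap C))) := by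
  set p := M.comap (C : R →+* HahnSeries Γ R)
  let _ := Ideal.Quotient.field p
  have hmax : (RingHom.ker (mapRingHom (Γ := Γ) (Ideal.Quotient.mk p))).IsMaximal :=
    RingHom.ker_isMaximal_of_surjective _ (mapRingHom_surjective Ideal.Quotient.mk_surjective)
  have hle : RingHom.ker (mapRingHom (Γ := Γ) (Ideal.Quotient.mk p)) ≤ M := by
    rw [ker_mapRingHom _ (by rw [Ideal.mk_ker]; exact IsNoetherian.noetherian p), Ideal.mk_ker]
    exact Ideal.map_comap_le
  exact (hmax.eq_of_le hM.ne_top hle).symm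

theorem isUnit_iff_span_range_coeff_eq_top {x : HahnSeries Γ R} :
    IsUnit x ↔ Ideal.span (Set.range x.coeff) = ⊤ := by
  refine ⟨span_range_coeff_eq_top_of_isUnit, fun hspan => by_contra fun hx => ?_⟩
  obtain ⟨M, hM, hxM⟩ := exists_max_ideal_of_mem_nonunits hx
  have hcoeff : ∀ g, x.coeff g ∈ M.comap C := by
    rw [eq_ker_mapRingHom_of_isMaximal M, mem_ker_mapRingHom] at hxM
    simpa using hxM
  have hle : Ideal.span (Set.range x.coeff) ≤ M.comap C :=
    Ideal.span_le.2 (Set.range_subset_iff.2 hcoeff)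
  exact Ideal.comap_ne_top C hM.ne_top (top_unique (hspan ▸ hle))

end IsUnit

end HahnSeries

/-- A formal Laurent series `f ∈ ℤ_d((x))` is a unit if and only if the ideal of
`ℤ_d` generated by its coefficients is all of `ℤ_d` (equivalently, some finite
`ℤ_d`-linear combination of the coefficients equals `1`). -/
theorem laurentSeries_isUnit_iff_coeff_span (d : ℕ) (hd : 0 < d)
    (f : LaurentSeries (ZMod d)) :
    IsUnit f ↔ Ideal.span {r : ZMod d | ∃ i : ℤ, f.coeff i = r} = ⊤ := by
  have : NeZero d := ⟨hd.ne'⟩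
  exact HahnSeries.isUnit_iff_span_range_coeff_eq_top
end

section
/- Let P = ⊕_{i∈I}(ℤ_d)² and P̂ = Π_{i∈I}(ℤ_d)², with the pairing Ω̂ : P̂ × P → ℤ_d given by the (finite) sum of sitewise symplectic forms. For a subgroup A ⊆ P̂, let A^⊥ = {c ∈ P : Ω̂(a,c) = 0 ∀a ∈ A} and for M ⊆ P let M^⊥ = {ĉ ∈ P̂ : Ω̂(ĉ,m) = 0 ∀m ∈ M}. Then for any subgroup A ⊆ P̂ whose elements all have finite support (i.e. A ⊆ P viewed inside P̂), the double commutant A^{⊥⊥} equals the closure Â of A in P̂, i.e. the set of all (possibly infinite, sitewise well-defined) products of elements of A. Concretely, ĉ ∈ A^{⊥⊥} if and only if for every finite region Γ ⊆ I there exists a_Γ ∈ A with π_Γ(a_Γ) = π_Γ(ĉ). -/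
/-! The inclusion `Â ⊆ A^{⊥⊥}` holds because `Ω̂(ĉ, m)` only sees `ĉ` on the support of `m`.
Conversely, if `ĉ` agrees with no element of `A` on a finite region `Γ`, then `ĉ` lies outside the
subgroup `A + {g | g = 0 on Γ}` of `P̂`, so some `ℤ_d`-valued character separates them: take a
`ℚ/ℤ`-valued one, which lands in the `d`-torsion of `ℚ/ℤ`, a copy of `ℤ_d`. A character vanishing
off `Γ` is `Ω̂(·, m)` for some `m` supported on `Γ`, by nondegeneracy of the sitewise symplectic
form; this `m` lies in `A^⊥` but pairs nontrivially with `ĉ`. -/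

/-- The pairing `Ω̂ : P̂ × P → ℤ_d`: for `c : I → (ℤ_d)²` (possibly infinite support)
and `m : I →₀ (ℤ_d)²` (finite support), the finite sum of sitewise symplectic forms. -/
noncomputable def OmegaHat {I : Type*} {d : ℕ} (c : I → ZMod d × ZMod d)
    (m : I →₀ ZMod d × ZMod d) : ZMod d :=
  m.sum fun i v => (c i).1 * v.2 - (c i).2 * v.1

/-- For `N ⊆ P̂`, `N^⊥ = {c ∈ P : Ω̂(n,c) = 0 ∀ n ∈ N}`. -/
def perpDown {I : Type*} {d : ℕ} (N : Set (I → ZMod d × ZMod d)) :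
    Set (I →₀ ZMod d × ZMod d) :=
  {c | ∀ n ∈ N, OmegaHat n c = 0}

/-- For `M ⊆ P`, `M^⊥ = {ĉ ∈ P̂ : Ω̂(ĉ,m) = 0 ∀ m ∈ M}`. -/
def perpUp {I : Type*} {d : ℕ} (M : Set (I →₀ ZMod d × ZMod d)) :
    Set (I → ZMod d × ZMod d) :=
  {c | ∀ m ∈ M, OmegaHat c m = 0}

section ZModCharacters

variable (d : ℕ)

noncomputable def ZMod.toRatCircle : ZMod d →+ AddCircle (1 : ℚ) :=
  ZMod.lift d ⟨CharacterModule.int.divByNat d, CharacterModule.int.divByNat_self d⟩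

lemma ZMod.toRatCircle_intCast (k : ℤ) :
    ZMod.toRatCircle d k = ((k / d : ℚ) : AddCircle (1 : ℚ)) := by
  simp [ZMod.toRatCircle, ZMod.lift_coe, div_eq_mul_inv]

lemma ZMod.toRatCircle_injective [NeZero d] : Function.Injective (ZMod.toRatCircle d) := by
  refine (injective_iff_map_eq_zero _).mpr fun z hz => ?_
  obtain ⟨k, rfl⟩ := ZMod.intCast_surjective z
  rw [ZMod.toRatCircle_intCast, AddCircle.coe_eq_zero_iff] at hz
  obtain ⟨n, hn⟩ := hz
  refine (ZMod.intCast_zmod_eq_zero_iff_dvd k d).mpr ⟨n, ?_⟩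
  rw [zsmul_one, eq_div_iff (NeZero.ne (d : ℚ))] at hn
  exact_mod_cast hn.symm.trans (mul_comm _ _)

lemma ZMod.mem_range_toRatCircle [NeZero d] {u : AddCircle (1 : ℚ)} (hu : d • u = 0) :
    u ∈ (ZMod.toRatCircle d).range := by
  obtain ⟨m, -, rfl⟩ := (AddCircle.nsmul_eq_zero_iff (NeZero.pos d)).mp hu
  refine ⟨((m : ℤ) : ZMod d), ?_⟩
  rw [ZMod.toRatCircle_intCast, mul_one, Int.cast_natCast]

end ZModCharacters

theorem AddSubgroup.exists_zmod_le_ker_of_notMem {d : ℕ} [NeZero d] {G : Type*}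
    [AddCommGroup G] [Module (ZMod d) G] {B : AddSubgroup G} {x : G} (hx : x ∉ B) :
    ∃ φ : G →+ ZMod d, B ≤ φ.ker ∧ φ x ≠ 0 := by
  have hxB : (x : G ⧸ B) ≠ 0 := fun h => hx ((QuotientAddGroup.eq_zero_iff x).mp h)
  obtain ⟨χ, hχ⟩ := CharacterModule.exists_character_apply_ne_zero_of_ne_zero hxB
  have hχ_mem_range (q : G ⧸ B) : χ q ∈ (ZMod.toRatCircle d).range := by
    refine ZMod.mem_range_toRatCircle d ?_
    induction q using QuotientAddGroup.induction_on with
    | H g => rw [← map_nsmul, ← QuotientAddGroup.mk_nsmul, ← Nat.cast_smul_eq_nsmul (ZMod d),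
        ZMod.natCast_self, zero_smul, QuotientAddGroup.mk_zero, map_zero]
  let e := AddMonoidHom.ofInjective (ZMod.toRatCircle_injective d)
  let φ : G →+ ZMod d :=
    (e.symm.toAddMonoidHom.comp (χ.codRestrict _ hχ_mem_range)).comp (QuotientAddGroup.mk' B)
  refine ⟨φ, fun b hb => ?_, fun h => hχ ?_⟩
  · simp [φ, (QuotientAddGroup.eq_zero_iff b).mpr hb]
  · have h' : χ.codRestrict _ hχ_mem_range x = 0 := by simpa [φ] using h
    exact congrArg Subtype.val h'

theorem AddMonoidHom.eq_sum_pi_single_of_forall_eq_zero {ι M : Type*} {π : ι → Type*}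
    [DecidableEq ι] [∀ i, AddCommGroup (π i)] [AddCommGroup M] (φ : (∀ i, π i) →+ M)
    {Γ : Finset ι} (hφ : ∀ g, (∀ i ∈ Γ, g i = 0) → φ g = 0) (g : ∀ i, π i) :
    φ g = ∑ i ∈ Γ, φ (Pi.single i (g i)) := by
  rw [← map_sum, ← sub_eq_zero, ← map_sub]
  refine hφ _ fun i hi => ?_
  rw [Pi.sub_apply, Finset.sum_apply, Finset.sum_pi_single, if_pos hi, sub_self]

section OmegaHat

variable {I : Type*} {d : ℕ}

lemma omegaHat_congr {c c' : I → ZMod d × ZMod d} {m : I →₀ ZMod d × ZMod d}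
    (h : ∀ i ∈ m.support, c i = c' i) : OmegaHat c m = OmegaHat c' m :=
  Finsupp.sum_congr fun i hi => by rw [h i hi]

lemma omegaHat_sum_single (c : I → ZMod d × ZMod d) (Γ : Finset I)
    (w : I → ZMod d × ZMod d) :
    OmegaHat c (∑ i ∈ Γ, Finsupp.single i (w i)) =
      ∑ i ∈ Γ, ((c i).1 * (w i).2 - (c i).2 * (w i).1) := by
  rw [OmegaHat, ← Finsupp.sum_finsetSum_index (by simp)
    (by intros; simp only [Prod.fst_add, Prod.snd_add]; ring)]
  simp [Finsupp.sum_single_index]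

lemma exists_omegaHat_eq {Γ : Finset I} (φ : (I → ZMod d × ZMod d) →+ ZMod d)
    (hφ : ∀ g, (∀ i ∈ Γ, g i = 0) → φ g = 0) :
    ∃ m : I →₀ ZMod d × ZMod d, ∀ g, OmegaHat g m = φ g := by
  classical
  let e₁ (i : I) : I → ZMod d × ZMod d := Pi.single i (1, 0)
  let e₂ (i : I) : I → ZMod d × ZMod d := Pi.single i (0, 1)
  refine ⟨∑ i ∈ Γ, Finsupp.single i (-φ (e₂ i), φ (e₁ i)), fun g => ?_⟩
  have h_site (i : I) (v : ZMod d × ZMod d) :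
      φ (Pi.single i v) = v.1 * φ (e₁ i) + v.2 * φ (e₂ i) := by
    have : Pi.single i v = v.1 • e₁ i + v.2 • e₂ i := by
      rw [← Pi.single_smul, ← Pi.single_smul, ← Pi.single_add]; simp
    rw [this, map_add, ZMod.map_smul, ZMod.map_smul, smul_eq_mul, smul_eq_mul]
  rw [omegaHat_sum_single, φ.eq_sum_pi_single_of_forall_eq_zero hφ]
  refine Finset.sum_congr rfl fun i _ => ?_
  rw [h_site i (g i)]
  ring

end OmegaHat

theorem double_perp_eq_closure_general {I : Type*} {d : ℕ} [NeZero d]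
    (A : AddSubgroup (I →₀ ZMod d × ZMod d)) :
    perpUp (perpDown ((fun a : I →₀ ZMod d × ZMod d => (a : I → ZMod d × ZMod d)) ''
        (A : Set (I →₀ ZMod d × ZMod d)))) =
      {c : I → ZMod d × ZMod d | ∀ Γ : Finset I, ∃ a ∈ A, ∀ i ∈ Γ, a i = c i} := by
  ext c
  refine ⟨fun hc Γ => ?_, fun hc m hm => ?_⟩
  · let K : AddSubgroup (I → ZMod d × ZMod d) := AddSubgroup.pi (Γ : Set I) fun _ => ⊥
    have hcB : c ∈ A.map Finsupp.coeFnAddHom ⊔ K := by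
      by_contra hc'
      obtain ⟨φ, hBφ, hφc⟩ := AddSubgroup.exists_zmod_le_ker_of_notMem (d := d) hc'
      obtain ⟨m, hm⟩ := exists_omegaHat_eq φ fun g hg => hBφ <| AddSubgroup.mem_sup_right <|
        (AddSubgroup.mem_pi _).mpr fun i hi => AddSubgroup.mem_bot.mpr (hg i hi)
      refine hφc (hm c ▸ hc m ?_)
      rintro _ ⟨a, ha, rfl⟩
      rw [hm]
      exact hBφ (AddSubgroup.mem_sup_left ⟨a, ha, rfl⟩)
    obtain ⟨_, ⟨a, ha, rfl⟩, k, hk, hak⟩ := AddSubgroup.mem_sup.mp hcB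
    refine ⟨a, ha, fun i hi => ?_⟩
    rw [← hak, Pi.add_apply, AddSubgroup.mem_bot.mp ((AddSubgroup.mem_pi _).mp hk i hi),
      add_zero]
    rfl
  · obtain ⟨a, ha, hac⟩ := hc m.support
    rw [omegaHat_congr fun i hi => (hac i hi).symm]
    exact hm _ ⟨a, ha, rfl⟩

/-- For a subgroup `A` of finitely supported elements, viewed inside `P̂`, the double
commutant `A^{⊥⊥}` equals the closure `Â`: the set of `ĉ ∈ P̂` that agree with some
element of `A` on every finite region. -/
theorem double_perp_eq_closure {I : Type*} [Countable I] {d : ℕ} [NeZero d]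
    (A : AddSubgroup (I →₀ ZMod d × ZMod d)) :
    perpUp (perpDown ((fun a : I →₀ ZMod d × ZMod d => (a : I → ZMod d × ZMod d)) ''
        (A : Set (I →₀ ZMod d × ZMod d)))) =
      {c : I → ZMod d × ZMod d | ∀ Γ : Finset I, ∃ a ∈ A, ∀ i ∈ Γ, a i = c i} :=
  double_perp_eq_closure_general A
end

section
/- A Laurent polynomial r ∈ ℤ_d[y, y^{−1}] is a non-zero-divisor only if the ideal of ℤ_d generated by its coefficients is all of ℤ_d; consequently any non-zero-divisor of ℤ_d[y, y^{−1}] becomes a unit in the formal Laurent series ring ℤ_d((y)). -/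
/-!
If the coefficients of `r` lie in a proper ideal `I` of the finite ring `ℤ_d`, then `I` consists of
zero divisors, so (the ring being Noetherian) a single nonzero constant `e` annihilates `I`, and
`r * e = 0`.

If instead the coefficients generate `ℤ_d`, then `r` is nonzero modulo every maximal ideal `M`,
hence invertible in the Laurent series field over `ℤ_d ⧸ M`: some `1 - r * s_M` has all its
coefficients in `M`. Taking every `M` with multiplicity `n`, where the Jacobson radical `J`
satisfies `J ^ n = 0`, the product of these factors is of the form `1 - r * s` and has its
coefficients in `(∏ M) ^ n ≤ J ^ n = 0`, so `r * s = 1`.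
-/

namespace HahnSeries

section PartialOrder

variable {Γ : Type*} [PartialOrder Γ]

theorem exists_map_eq_of_surjective {R S : Type*} [Zero R] [Zero S] {f : ZeroHom R S}
    (hf : Function.Surjective f) (w : HahnSeries Γ S) : ∃ y : HahnSeries Γ R, y.map f = w := by
  classical
  let s : ZeroHom S R := ⟨fun c => if c = 0 then 0 else Function.surjInv hf c, if_pos rfl⟩
  refine ⟨w.map s, ?_⟩
  ext g
  by_cases hg : w.coeff g = 0
  · simp [s, hg]
  · simp [s, hg, Function.surjInv_eq hf]

theorem map_ne_zero_of_span_coeff_eq_top {R S : Type*} [Semiring R] [Semiring S] [Nontrivial S]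
    (f : R →+* S) {x : HahnSeries Γ R} (hx : Ideal.span {c | ∃ g, x.coeff g = c} = ⊤) :
    x.map f ≠ 0 := by
  intro h
  have hker : Ideal.span {c | ∃ g, x.coeff g = c} ≤ RingHom.ker f := by
    rw [Ideal.span_le]
    rintro _ ⟨g, rfl⟩
    simpa using congrArg (coeff · g) h
  exact RingHom.ker_ne_top f (top_le_iff.mp (hx ▸ hker))

variable [AddCommMonoid Γ] [IsOrderedCancelAddMonoid Γ] {R : Type*} [CommRing R]

theorem coeff_mul_mem_mul {I J : Ideal R} {x y : HahnSeries Γ R} (hx : ∀ g, x.coeff g ∈ I)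
    (hy : ∀ g, y.coeff g ∈ J) (g : Γ) : (x * y).coeff g ∈ I * J := by
  rw [coeff_mul]
  exact Ideal.sum_mem _ fun ij _ => Ideal.mul_mem_mul (hx ij.1) (hy ij.2)

theorem exists_coeff_one_sub_mul_mem_of_isUnit_map {I : Ideal R} {x : HahnSeries Γ R}
    (hx : IsUnit (x.map (Ideal.Quotient.mk I))) : ∃ y, ∀ g, (1 - x * y).coeff g ∈ I := by
  obtain ⟨w, hw⟩ := hx.exists_right_inv
  obtain ⟨y, rfl⟩ := exists_map_eq_of_surjective (f := (Ideal.Quotient.mk I : ZeroHom R (R ⧸ I)))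
    Ideal.Quotient.mk_surjective w
  refine ⟨y, fun g => Ideal.Quotient.eq_zero_iff_mem.mp ?_⟩
  have hxy : (x * y).map (Ideal.Quotient.mk I) = 1 :=
    (HahnSeries.map_mul (Ideal.Quotient.mk I : R →ₙ+* R ⧸ I)).trans hw
  have h1 : (1 : HahnSeries Γ R).map (Ideal.Quotient.mk I) = 1 :=
    HahnSeries.map_one (Ideal.Quotient.mk I).toMonoidWithZeroHom
  rw [coeff_sub, map_sub, ← map_coeff, ← map_coeff, hxy, h1, sub_self]

theorem exists_coeff_one_sub_mul_mem_prod (S : Multiset (Ideal R)) {x : HahnSeries Γ R}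
    (hx : ∀ I ∈ S, IsUnit (x.map (Ideal.Quotient.mk I))) :
    ∃ y, ∀ g, (1 - x * y).coeff g ∈ S.prod := by
  induction S using Multiset.induction_on with
  | empty => exact ⟨0, fun g => by simp⟩
  | cons I S ih =>
    obtain ⟨y₁, hy₁⟩ :=
      exists_coeff_one_sub_mul_mem_of_isUnit_map (hx I (Multiset.mem_cons_self I S))
    obtain ⟨y₂, hy₂⟩ := ih fun J hJ => hx J (Multiset.mem_cons_of_mem hJ)
    refine ⟨y₁ + y₂ - x * y₁ * y₂, fun g => ?_⟩
    have hprod : 1 - x * (y₁ + y₂ - x * y₁ * y₂) = (1 - x * y₁) * (1 - x * y₂) := by ring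
    rw [hprod, Multiset.prod_cons]
    exact coeff_mul_mem_mul hy₁ hy₂ g

theorem isUnit_of_forall_isUnit_map_mk (S : Multiset (Ideal R)) (hS : S.prod = ⊥)
    {x : HahnSeries Γ R} (hx : ∀ I ∈ S, IsUnit (x.map (Ideal.Quotient.mk I))) : IsUnit x := by
  obtain ⟨y, hy⟩ := exists_coeff_one_sub_mul_mem_prod S hx
  refine .of_mul_eq_one y (sub_eq_zero.mp ?_).symm
  ext g
  simpa [hS] using hy g

theorem span_coeff_eq_top_of_forall_mul_C_eq_zero [IsArtinianRing R] {x : HahnSeries Γ R}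
    (hx : ∀ e : R, x * C e = 0 → e = 0) : Ideal.span {c | ∃ g, x.coeff g = c} = ⊤ := by
  by_contra hne
  set I := Ideal.span {c | ∃ g, x.coeff g = c}
  have hdisj : Disjoint (I : Set R) (nonZeroDivisors R) :=
    Set.disjoint_left.mpr fun c hcI hc =>
      hne (I.eq_top_of_isUnit_mem hcI (IsArtinianRing.isUnit_of_mem_nonZeroDivisors hc))
  obtain ⟨e, he, hne0⟩ :=
    SetLike.exists_of_lt (Ideal.bot_lt_annihilator_of_disjoint_nonZeroDivisors hdisj)
  refine hne0 (hx e ?_)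
  ext g
  rw [C_apply, coeff_mul_single_zero, coeff_zero, mul_comm]
  exact congrArg Subtype.val (Module.mem_annihilator.mp he ⟨_, Ideal.subset_span ⟨g, rfl⟩⟩)

end PartialOrder

section LinearOrder

variable {Γ : Type*} [AddCommGroup Γ] [LinearOrder Γ] [IsOrderedAddMonoid Γ]
  {R : Type*} [CommRing R]

theorem isUnit_map_mk_of_span_coeff_eq_top (M : Ideal R) [M.IsMaximal] {x : HahnSeries Γ R}
    (hx : Ideal.span {c | ∃ g, x.coeff g = c} = ⊤) : IsUnit (x.map (Ideal.Quotient.mk M)) :=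
  letI := Ideal.Quotient.field M
  isUnit_iff_ne_zero.mpr (map_ne_zero_of_span_coeff_eq_top _ hx)

theorem isUnit_of_span_coeff_eq_top [IsArtinianRing R] {x : HahnSeries Γ R}
    (hx : Ideal.span {c | ∃ g, x.coeff g = c} = ⊤) : IsUnit x := by
  obtain ⟨n, hn⟩ := IsArtinianRing.isNilpotent_jacobson_bot (R := R)
  set s := (IsArtinianRing.setOfPred_isMaximal_finite R).toFinset
  have hs : s.prod id ≤ Ideal.jacobson ⊥ :=
    Ideal.prod_le_inf.trans (le_sInf fun M hM => Finset.inf_le (by simpa [s] using hM.2))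
  refine isUnit_of_forall_isUnit_map_mk (n • s.val) ?_ fun M hM => ?_
  · rw [Multiset.prod_nsmul, Finset.prod_val, ← le_bot_iff, ← Ideal.zero_eq_bot, ← hn]
    exact Ideal.pow_right_mono hs n
  · have : M.IsMaximal := by simpa [s] using Multiset.mem_of_mem_nsmul hM
    exact isUnit_map_mk_of_span_coeff_eq_top M hx

end LinearOrder

end HahnSeries

theorem laurentPolynomial_nonZeroDivisor_isUnit_general (d : ℕ) (hd : 0 < d)
    (r : LaurentSeries (ZMod d))
    (hnzd : ∀ s : LaurentSeries (ZMod d), s.support.Finite → r * s = 0 → s = 0) :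
    Ideal.span {c : ZMod d | ∃ i : ℤ, r.coeff i = c} = ⊤ ∧ IsUnit r := by
  have : NeZero d := ⟨hd.ne'⟩
  have hspan : Ideal.span {c : ZMod d | ∃ i : ℤ, r.coeff i = c} = ⊤ :=
    HahnSeries.span_coeff_eq_top_of_forall_mul_C_eq_zero fun e he =>
      have hC : (HahnSeries.C e : LaurentSeries (ZMod d)).support.Finite :=
        (Set.finite_singleton 0).subset HahnSeries.support_single_subset
      HahnSeries.C_injective ((hnzd _ hC he).trans (HahnSeries.C_zero (Γ := ℤ)).symm)
  exact ⟨hspan, HahnSeries.isUnit_of_span_coeff_eq_top hspan⟩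

/-- A Laurent polynomial over `ℤ_d`, realized inside the formal Laurent series ring
`ℤ_d((y))` as a finitely supported series `r`: if `r` is a non-zero-divisor among
Laurent polynomials (`r·s = 0 ⇒ s = 0` for finitely supported `s`), then the ideal
of `ℤ_d` generated by the coefficients of `r` is all of `ℤ_d`, and consequently `r`
is a unit of `ℤ_d((y))`. -/
theorem laurentPolynomial_nonZeroDivisor_isUnit (d : ℕ) (hd : 0 < d)
    (r : LaurentSeries (ZMod d)) (hfin : r.support.Finite)
    (hnzd : ∀ s : LaurentSeries (ZMod d), s.support.Finite → r * s = 0 → s = 0) :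
    Ideal.span {c : ZMod d | ∃ i : ℤ, r.coeff i = c} = ⊤ ∧ IsUnit r :=
  laurentPolynomial_nonZeroDivisor_isUnit_general d hd r hnzd
end
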